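/- Let R be a commutative ring, let q be a ternary quartic form over R, and let 𝔤 = Σ_{ξ,η ∈ {x,y,z}} c_{ξη} ξ∂_η be a derivation of R[x,y,z] with c_{xx} + c_{yy} + c_{zz} = 0 (an element of 𝔰𝔩₃(R) acting as a differential operator on polynomials). Then ⟨𝔤q, H(q)⟩ = 0. -/

import Mathlib

open MvPolynomial

noncomputable section

/-- The classical invariant `S` of a binary quartic form with coefficients `f 0, …, f 4`. -/
def Sinv {R : Type*} [CommRing R] (f : Fin 5 → R) : R :=
  12 * f 0 * f 4 - 3 * f 1 * f 3 + f 2 ^ 2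

/-- The classical invariant `T` of a binary quartic form with coefficients `f 0, …, f 4`. -/
def Tinv {R : Type*} [CommRing R] (f : Fin 5 → R) : R :=
  72 * f 0 * f 2 * f 4 - 27 * f 0 * f 3 ^ 2 - 27 * f 1 ^ 2 * f 4
    + 9 * f 1 * f 2 * f 3 - 2 * f 2 ^ 3

/-- The binary quartic form `f₀ y⁴ + f₁ y³z + f₂ y²z² + f₃ yz³ + f₄ z⁴`. -/
def binQuartic {R : Type*} [CommRing R] (f : Fin 5 → R) : MvPolynomial (Fin 2) R :=
  ∑ i : Fin 5, C (f i) * X 0 ^ (4 - (i : ℕ)) * X 1 ^ (i : ℕ)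

/-- The `i`-th coefficient of a binary quartic form: coefficient of `y^(4-i) z^i`. -/
def binCoeff {R : Type*} [CommRing R] (g : MvPolynomial (Fin 2) R) (i : Fin 5) : R :=
  coeff (Finsupp.single 0 (4 - (i : ℕ)) + Finsupp.single 1 (i : ℕ)) g

/-- The substitution `g(y,z) = q(-v·y - w·z, u·y, u·z)`, a binary quartic form in `y, z` with
coefficients in `R[u,v,w]`. -/
def gsub {R : Type*} [CommRing R] (q : MvPolynomial (Fin 3) R) :
    MvPolynomial (Fin 2) (MvPolynomial (Fin 3) R) :=
  aeval
    (![(C (- X 1) * X 0 - C (X 2) * X 1 : MvPolynomial (Fin 2) (MvPolynomial (Fin 3) R)),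
       C (X 0) * X 0, C (X 0) * X 1]) q

/-- `u⁴ · H(q)`, the invariant `S` of `g(y,z) = q(-vy-wz, uy, uz)`; the harmonic quartic `H(q)`
is the form determined by `u⁴ · H(q) = SG q`. -/
def SG {R : Type*} [CommRing R] (q : MvPolynomial (Fin 3) R) : MvPolynomial (Fin 3) R :=
  Sinv (fun i => binCoeff (gsub q) i)

/-- `u⁶ · K(q)`, the invariant `T` of `g(y,z) = q(-vy-wz, uy, uz)`; the harmonic sextic `K(q)`
is the form determined by `u⁶ · K(q) = TG q`. -/
def TG {R : Type*} [CommRing R] (q : MvPolynomial (Fin 3) R) : MvPolynomial (Fin 3) R :=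
  Tinv (fun i => binCoeff (gsub q) i)

/-- dot product of two vectors in `R³`. -/
def dot3 {R : Type*} [CommRing R] (d a : Fin 3 → R) : R :=
  d 0 * a 0 + d 1 * a 1 + d 2 * a 2

/-- restriction of a ternary form to the parameterized line `(y,z) ↦ y·a + z·b`. -/
def restrictLine {R : Type*} [CommRing R] (q : MvPolynomial (Fin 3) R) (a b : Fin 3 → R) :
    MvPolynomial (Fin 2) R :=
  aeval (fun i => C (a i) * X 0 + C (b i) * X 1) q

/-- A binary quartic form vanishes identically or has a root of multiplicity at least `3`:
`f = L³·M` with `L ≠ 0` linear and `M` linear (possibly zero). -/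
def HasTripleRoot {R : Type*} [CommRing R] (f : MvPolynomial (Fin 2) R) : Prop :=
  ∃ L M : MvPolynomial (Fin 2) R,
    L.IsHomogeneous 1 ∧ M.IsHomogeneous 1 ∧ L ≠ 0 ∧ f = L ^ 3 * M

/-- The line with dual coordinates `d` is an inflection line of the quartic `{q = 0}`. -/
def IsInflectionLine {k : Type*} [Field k] (q : MvPolynomial (Fin 3) k) (d : Fin 3 → k) :
    Prop :=
  d ≠ 0 ∧ ∃ a b : Fin 3 → k, LinearIndependent k ![a, b] ∧
    dot3 d a = 0 ∧ dot3 d b = 0 ∧ HasTripleRoot (restrictLine q a b)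

/-- The line with dual coordinates `d` is a simple inflection line of `{q = 0}` with
inflection point `p`. -/
def IsSimpleInflectionLineAt {k : Type*} [Field k] (q : MvPolynomial (Fin 3) k)
    (d p : Fin 3 → k) : Prop :=
  d ≠ 0 ∧ ∃ (a b : Fin 3 → k) (s t : k), LinearIndependent k ![a, b] ∧
    dot3 d a = 0 ∧ dot3 d b = 0 ∧ (s, t) ≠ (0, 0) ∧
    (∀ i, p i = s * a i + t * b i) ∧
    eval p q = 0 ∧ (∃ i, eval p (pderiv i q) ≠ 0) ∧
    ∃ L M : MvPolynomial (Fin 2) k, L.IsHomogeneous 1 ∧ M.IsHomogeneous 1 ∧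
      LinearIndependent k ![L, M] ∧
      restrictLine q a b = L ^ 3 * M ∧ eval ![s, t] L = 0

/-- The line with dual coordinates `d` is a hyperinflection line of `{q = 0}` with
hyperinflection point `p`. -/
def IsHyperinflectionLineAt {k : Type*} [Field k] (q : MvPolynomial (Fin 3) k)
    (d p : Fin 3 → k) : Prop :=
  d ≠ 0 ∧ ∃ (a b : Fin 3 → k) (s t : k), LinearIndependent k ![a, b] ∧
    dot3 d a = 0 ∧ dot3 d b = 0 ∧ (s, t) ≠ (0, 0) ∧
    (∀ i, p i = s * a i + t * b i) ∧
    eval p q = 0 ∧ (∃ i, eval p (pderiv i q) ≠ 0) ∧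
    ∃ (c : k) (L : MvPolynomial (Fin 2) k), c ≠ 0 ∧ L.IsHomogeneous 1 ∧ L ≠ 0 ∧
      restrictLine q a b = C c * L ^ 4 ∧ eval ![s, t] L = 0

/-- The pairing `⟨·,·⟩` between quartic forms in `x,y,z` and quartic forms in `u,v,w`:
`⟨x^i y^j z^k, u^i v^j w^k⟩ = i!j!k!/2`. -/
def pairQ {R : Type*} [CommRing R] (q h : MvPolynomial (Fin 3) R) : R :=
  ∑ m ∈ q.support,
    (((m 0).factorial * (m 1).factorial * (m 2).factorial / 2 : ℕ) : R)
      * coeff m q * coeff m h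

/-- The action of `Σ c_{ξη} ξ ∂_η ∈ 𝔤𝔩₃(R)` on polynomials. -/
def lieAct {R : Type*} [CommRing R] (c : Fin 3 → Fin 3 → R)
    (q : MvPolynomial (Fin 3) R) : MvPolynomial (Fin 3) R :=
  ∑ ξ : Fin 3, ∑ η : Fin 3, C (c ξ η) * (X ξ * pderiv η q)

/-- substitution of variables by the linear change of coordinates `M`: `q(M·(x,y,z)ᵗ)`. -/
def substM {R : Type*} [CommRing R] (M : Matrix (Fin 3) (Fin 3) R)
    (q : MvPolynomial (Fin 3) R) : MvPolynomial (Fin 3) R :=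
  aeval (fun i => ∑ j : Fin 3, C (M i j) * X j) q

/-- The quartic form `q_ε = (x−y)⁴ + (x−z)⁴ + (y−εz)⁴ − (x⁴ + y⁴ + z⁴)`. -/
def qeps {k : Type*} [CommRing k] (ε : k) : MvPolynomial (Fin 3) k :=
  (X 0 - X 1) ^ 4 + (X 0 - X 2) ^ 4 + (X 1 - C ε * X 2) ^ 4
    - (X 0 ^ 4 + X 1 ^ 4 + X 2 ^ 4)

/-!
Expanding `g(y,z) = q(-vy-wz, uy, uz)` coefficientwise shows that `S(g) = u⁴ · H` for an
explicit form `H` whose coefficients are quadratic in those of `q`; since `u⁴` is a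
non-zero-divisor, this `H` is the harmonic quartic. The pairing is linear in `𝔤`, so it suffices
that `⟨x_ξ ∂_η q, H⟩` vanishes for `ξ ≠ η` and does not depend on `ξ` for `ξ = η`: these are
polynomial identities in the fifteen coefficients of `q`.
-/

section
variable {R : Type*} [CommRing R]

def mono3 (i j k : ℕ) : Fin 3 →₀ ℕ :=
  Finsupp.single 0 i + Finsupp.single 1 j + Finsupp.single 2 k

@[simp] lemma mono3_apply_zero (i j k : ℕ) : mono3 i j k 0 = i := by simp [mono3]
@[simp] lemma mono3_apply_one (i j k : ℕ) : mono3 i j k 1 = j := by simp [mono3]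
@[simp] lemma mono3_apply_two (i j k : ℕ) : mono3 i j k 2 = k := by simp [mono3]

lemma mono3_eta (m : Fin 3 →₀ ℕ) : mono3 (m 0) (m 1) (m 2) = m := by
  ext a; fin_cases a <;> simp

@[simp] lemma mono3_inj {i j k i' j' k' : ℕ} :
    mono3 i j k = mono3 i' j' k' ↔ i = i' ∧ j = j' ∧ k = k' := by
  refine ⟨fun h => ⟨?_, ?_, ?_⟩, by rintro ⟨rfl, rfl, rfl⟩; rfl⟩
  · simpa using DFunLike.congr_fun h 0
  · simpa using DFunLike.congr_fun h 1
  · simpa using DFunLike.congr_fun h 2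

lemma mono3_add_single (i j k : ℕ) (ξ : Fin 3) :
    mono3 i j k + Finsupp.single ξ 1 =
      mono3 (i + if ξ = 0 then 1 else 0) (j + if ξ = 1 then 1 else 0)
        (k + if ξ = 2 then 1 else 0) := by
  ext a; fin_cases a <;> fin_cases ξ <;> simp

lemma mono3_sub_single (i j k : ℕ) (ξ : Fin 3) :
    mono3 i j k - Finsupp.single ξ 1 =
      mono3 (i - if ξ = 0 then 1 else 0) (j - if ξ = 1 then 1 else 0)
        (k - if ξ = 2 then 1 else 0) := by
  ext a; fin_cases a <;> fin_cases ξ <;> simp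

lemma C_mul_X_pow_mul_X_pow_mul_X_pow_eq_monomial (r : R) (i j k : ℕ) :
    (C r * X 0 ^ i * X 1 ^ j * X 2 ^ k : MvPolynomial (Fin 3) R) = monomial (mono3 i j k) r := by
  rw [C_apply, X_pow_eq_monomial, X_pow_eq_monomial, X_pow_eq_monomial, monomial_mul,
    monomial_mul, monomial_mul]
  simp [mono3]

def coeff3 (q : MvPolynomial (Fin 3) R) (i j k : ℕ) : R := coeff (mono3 i j k) q

def ternaryQuartic (a : ℕ → ℕ → ℕ → R) : MvPolynomial (Fin 3) R :=
  C (a 4 0 0) * X 0 ^ 4 * X 1 ^ 0 * X 2 ^ 0 + C (a 3 1 0) * X 0 ^ 3 * X 1 ^ 1 * X 2 ^ 0 +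
  C (a 3 0 1) * X 0 ^ 3 * X 1 ^ 0 * X 2 ^ 1 + C (a 2 2 0) * X 0 ^ 2 * X 1 ^ 2 * X 2 ^ 0 +
  C (a 2 1 1) * X 0 ^ 2 * X 1 ^ 1 * X 2 ^ 1 + C (a 2 0 2) * X 0 ^ 2 * X 1 ^ 0 * X 2 ^ 2 +
  C (a 1 3 0) * X 0 ^ 1 * X 1 ^ 3 * X 2 ^ 0 + C (a 1 2 1) * X 0 ^ 1 * X 1 ^ 2 * X 2 ^ 1 +
  C (a 1 1 2) * X 0 ^ 1 * X 1 ^ 1 * X 2 ^ 2 + C (a 1 0 3) * X 0 ^ 1 * X 1 ^ 0 * X 2 ^ 3 +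
  C (a 0 4 0) * X 0 ^ 0 * X 1 ^ 4 * X 2 ^ 0 + C (a 0 3 1) * X 0 ^ 0 * X 1 ^ 3 * X 2 ^ 1 +
  C (a 0 2 2) * X 0 ^ 0 * X 1 ^ 2 * X 2 ^ 2 + C (a 0 1 3) * X 0 ^ 0 * X 1 ^ 1 * X 2 ^ 3 +
  C (a 0 0 4) * X 0 ^ 0 * X 1 ^ 0 * X 2 ^ 4

lemma coeff_mono3_ternaryQuartic (a : ℕ → ℕ → ℕ → R) (i j k : ℕ) :
    coeff (mono3 i j k) (ternaryQuartic a) = if i + j + k = 4 then a i j k else 0 := by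
  simp only [ternaryQuartic, C_mul_X_pow_mul_X_pow_mul_X_pow_eq_monomial, coeff_add,
    coeff_monomial, mono3_inj]
  by_cases h : i + j + k = 4
  · rw [if_pos h]
    have hi : i ≤ 4 := by omega
    have hj : j ≤ 4 := by omega
    obtain rfl : k = 4 - i - j := by omega
    interval_cases i <;> interval_cases j <;> simp at h ⊢
  · rw [if_neg h]
    simp (disch := omega) only [if_neg, add_zero]

lemma MvPolynomial.IsHomogeneous.eq_ternaryQuartic {q : MvPolynomial (Fin 3) R}
    (hq : q.IsHomogeneous 4) : q = ternaryQuartic (coeff3 q) := by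
  ext m
  rw [← mono3_eta m, coeff_mono3_ternaryQuartic, coeff3]
  split_ifs with h
  · rfl
  · refine hq.coeff_eq_zero ?_
    simpa [Finsupp.degree_eq_sum, Fin.sum_univ_three] using h

lemma binCoeff_binQuartic (f : Fin 5 → R) (i : Fin 5) : binCoeff (binQuartic f) i = f i := by
  have hmono (j : Fin 5) :
      (C (f j) * X 0 ^ (4 - (j : ℕ)) * X 1 ^ (j : ℕ) : MvPolynomial (Fin 2) R) =
        monomial (Finsupp.single 0 (4 - (j : ℕ)) + Finsupp.single 1 (j : ℕ)) (f j) := by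
    rw [C_apply, X_pow_eq_monomial, X_pow_eq_monomial, monomial_mul, monomial_mul, zero_add,
      mul_one, mul_one]
  have hinj (j : Fin 5) : Finsupp.single 0 (4 - (j : ℕ)) + Finsupp.single 1 (j : ℕ) =
      Finsupp.single 0 (4 - (i : ℕ)) + Finsupp.single (1 : Fin 2) (i : ℕ) ↔ j = i :=
    ⟨fun h => Fin.ext (by simpa using DFunLike.congr_fun h 1), by rintro rfl; rfl⟩
  simp only [binCoeff, binQuartic, coeff_sum, hmono, coeff_monomial, hinj, Finset.sum_ite_eq',
    Finset.mem_univ, if_true]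

lemma gsub_ternaryQuartic (a : ℕ → ℕ → ℕ → R) :
    gsub (ternaryQuartic a) = binQuartic ![
      C (a 0 4 0) * X 0 ^ 4 - C (a 1 3 0) * X 0 ^ 3 * X 1 + C (a 2 2 0) * X 0 ^ 2 * X 1 ^ 2
        - C (a 3 1 0) * X 0 * X 1 ^ 3 + C (a 4 0 0) * X 1 ^ 4,
      C (a 0 3 1) * X 0 ^ 4 - C (a 1 2 1) * X 0 ^ 3 * X 1 - C (a 1 3 0) * X 0 ^ 3 * X 2
        + C (a 2 1 1) * X 0 ^ 2 * X 1 ^ 2 + 2 * C (a 2 2 0) * X 0 ^ 2 * X 1 * X 2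
        - C (a 3 0 1) * X 0 * X 1 ^ 3 - 3 * C (a 3 1 0) * X 0 * X 1 ^ 2 * X 2
        + 4 * C (a 4 0 0) * X 1 ^ 3 * X 2,
      C (a 0 2 2) * X 0 ^ 4 - C (a 1 1 2) * X 0 ^ 3 * X 1 - C (a 1 2 1) * X 0 ^ 3 * X 2
        + C (a 2 0 2) * X 0 ^ 2 * X 1 ^ 2 + 2 * C (a 2 1 1) * X 0 ^ 2 * X 1 * X 2
        + C (a 2 2 0) * X 0 ^ 2 * X 2 ^ 2 - 3 * C (a 3 0 1) * X 0 * X 1 ^ 2 * X 2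
        - 3 * C (a 3 1 0) * X 0 * X 1 * X 2 ^ 2 + 6 * C (a 4 0 0) * X 1 ^ 2 * X 2 ^ 2,
      C (a 0 1 3) * X 0 ^ 4 - C (a 1 0 3) * X 0 ^ 3 * X 1 - C (a 1 1 2) * X 0 ^ 3 * X 2
        + 2 * C (a 2 0 2) * X 0 ^ 2 * X 1 * X 2 + C (a 2 1 1) * X 0 ^ 2 * X 2 ^ 2
        - 3 * C (a 3 0 1) * X 0 * X 1 * X 2 ^ 2 - C (a 3 1 0) * X 0 * X 2 ^ 3
        + 4 * C (a 4 0 0) * X 1 * X 2 ^ 3,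
      C (a 0 0 4) * X 0 ^ 4 - C (a 1 0 3) * X 0 ^ 3 * X 2 + C (a 2 0 2) * X 0 ^ 2 * X 2 ^ 2
        - C (a 3 0 1) * X 0 * X 2 ^ 3 + C (a 4 0 0) * X 2 ^ 4] := by
  simp only [gsub, ternaryQuartic, binQuartic, Fin.sum_univ_five, map_add, map_mul, map_pow,
    map_sub, map_neg, map_ofNat, aeval_C, aeval_X, MvPolynomial.algebraMap_apply, algebraMap_eq,
    Matrix.cons_val_zero, Matrix.cons_val_one, Matrix.cons_val_two, Matrix.cons_val_three,
    Matrix.cons_val_four, Matrix.head_cons, Matrix.tail_cons, Fin.isValue, Fin.coe_ofNat_eq_mod,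
    Nat.reduceMod, Nat.reduceSub]
  ring

/-- `harmonicCoeff a i j k` is the coefficient of `u^i v^j w^k` in the harmonic quartic of the
quartic with coefficients `a`. -/
def harmonicCoeff (a : ℕ → ℕ → ℕ → R) : ℕ → ℕ → ℕ → R
  | 4, 0, 0 => a 0 2 2 ^ 2 - 3 * a 0 1 3 * a 0 3 1 + 12 * a 0 0 4 * a 0 4 0
  | 3, 1, 0 => 3 * a 0 3 1 * a 1 0 3 - 2 * a 0 2 2 * a 1 1 2 + 3 * a 0 1 3 * a 1 2 1
      - 12 * a 0 0 4 * a 1 3 0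
  | 3, 0, 1 => -12 * a 0 4 0 * a 1 0 3 + 3 * a 0 3 1 * a 1 1 2 - 2 * a 0 2 2 * a 1 2 1
      + 3 * a 0 1 3 * a 1 3 0
  | 2, 2, 0 => a 1 1 2 ^ 2 - 3 * a 1 0 3 * a 1 2 1 + 2 * a 0 2 2 * a 2 0 2
      - 3 * a 0 1 3 * a 2 1 1 + 12 * a 0 0 4 * a 2 2 0
  | 2, 1, 1 => -a 1 1 2 * a 1 2 1 + 9 * a 1 0 3 * a 1 3 0 - 6 * a 0 3 1 * a 2 0 2
      + 4 * a 0 2 2 * a 2 1 1 - 6 * a 0 1 3 * a 2 2 0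
  | 2, 0, 2 => a 1 2 1 ^ 2 - 3 * a 1 1 2 * a 1 3 0 + 12 * a 0 4 0 * a 2 0 2
      - 3 * a 0 3 1 * a 2 1 1 + 2 * a 0 2 2 * a 2 2 0
  | 1, 3, 0 => -2 * a 1 1 2 * a 2 0 2 + 3 * a 1 0 3 * a 2 1 1 + 3 * a 0 1 3 * a 3 0 1
      - 12 * a 0 0 4 * a 3 1 0
  | 1, 2, 1 => 4 * a 1 2 1 * a 2 0 2 - a 1 1 2 * a 2 1 1 - 6 * a 1 0 3 * a 2 2 0
      - 6 * a 0 2 2 * a 3 0 1 + 9 * a 0 1 3 * a 3 1 0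
  | 1, 1, 2 => -6 * a 1 3 0 * a 2 0 2 - a 1 2 1 * a 2 1 1 + 4 * a 1 1 2 * a 2 2 0
      + 9 * a 0 3 1 * a 3 0 1 - 6 * a 0 2 2 * a 3 1 0
  | 1, 0, 3 => 3 * a 1 3 0 * a 2 1 1 - 2 * a 1 2 1 * a 2 2 0 - 12 * a 0 4 0 * a 3 0 1
      + 3 * a 0 3 1 * a 3 1 0
  | 0, 4, 0 => a 2 0 2 ^ 2 - 3 * a 1 0 3 * a 3 0 1 + 12 * a 0 0 4 * a 4 0 0
  | 0, 3, 1 => -2 * a 2 0 2 * a 2 1 1 + 3 * a 1 1 2 * a 3 0 1 + 3 * a 1 0 3 * a 3 1 0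
      - 12 * a 0 1 3 * a 4 0 0
  | 0, 2, 2 => a 2 1 1 ^ 2 + 2 * a 2 0 2 * a 2 2 0 - 3 * a 1 2 1 * a 3 0 1
      - 3 * a 1 1 2 * a 3 1 0 + 12 * a 0 2 2 * a 4 0 0
  | 0, 1, 3 => -2 * a 2 1 1 * a 2 2 0 + 3 * a 1 3 0 * a 3 0 1 + 3 * a 1 2 1 * a 3 1 0
      - 12 * a 0 3 1 * a 4 0 0
  | 0, 0, 4 => a 2 2 0 ^ 2 - 3 * a 1 3 0 * a 3 1 0 + 12 * a 0 4 0 * a 4 0 0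
  | _, _, _ => 0

lemma SG_ternaryQuartic (a : ℕ → ℕ → ℕ → R) :
    SG (ternaryQuartic a) = X 0 ^ 4 * ternaryQuartic (harmonicCoeff a) := by
  simp only [SG, Sinv, gsub_ternaryQuartic, binCoeff_binQuartic]
  simp only [ternaryQuartic, harmonicCoeff, Matrix.cons_val_zero, Matrix.cons_val_one,
    Matrix.cons_val_two, Matrix.cons_val_three, Matrix.cons_val_four, Matrix.head_cons,
    Matrix.tail_cons, map_add, map_sub, map_mul, map_pow, map_neg, map_ofNat]
  ring

def harmonicQuartic (q : MvPolynomial (Fin 3) R) : MvPolynomial (Fin 3) R :=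
  ternaryQuartic (harmonicCoeff (coeff3 q))

lemma eq_harmonicQuartic_of_X_pow_mul_eq_SG {q h : MvPolynomial (Fin 3) R}
    (hq : q.IsHomogeneous 4) (hh : X 0 ^ 4 * h = SG q) : h = harmonicQuartic q := by
  rw [hq.eq_ternaryQuartic, SG_ternaryQuartic] at hh
  exact (isRegular_X_pow 4).left hh

def apolarWeight (m : Fin 3 →₀ ℕ) : ℕ :=
  (m 0).factorial * (m 1).factorial * (m 2).factorial / 2

lemma pairQ_eq_sum_of_support_subset {q : MvPolynomial (Fin 3) R} {s : Finset (Fin 3 →₀ ℕ)}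
    (hs : q.support ⊆ s) (h : MvPolynomial (Fin 3) R) :
    pairQ q h = ∑ m ∈ s, (apolarWeight m : R) * coeff m q * coeff m h :=
  Finset.sum_subset hs fun m _ hm => by rw [notMem_support_iff.mp hm, mul_zero, zero_mul]

lemma pairQ_add (p q h : MvPolynomial (Fin 3) R) : pairQ (p + q) h = pairQ p h + pairQ q h := by
  rw [pairQ_eq_sum_of_support_subset support_add h,
    pairQ_eq_sum_of_support_subset Finset.subset_union_left h,
    pairQ_eq_sum_of_support_subset Finset.subset_union_right h, ← Finset.sum_add_distrib]
  simp only [coeff_add, mul_add, add_mul]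

lemma pairQ_C_mul (r : R) (q h : MvPolynomial (Fin 3) R) : pairQ (C r * q) h = r * pairQ q h := by
  rw [C_mul', pairQ_eq_sum_of_support_subset support_smul h, pairQ, Finset.mul_sum]
  simp only [coeff_smul, smul_eq_mul, apolarWeight]
  exact Finset.sum_congr rfl fun m _ => by ring

lemma pairQ_lieAct (c : Fin 3 → Fin 3 → R) (q h : MvPolynomial (Fin 3) R) :
    pairQ (lieAct c q) h = ∑ ξ, ∑ η, c ξ η * pairQ (X ξ * pderiv η q) h := by
  change AddMonoidHom.mk' (pairQ · h) (pairQ_add · · h) (lieAct c q) = _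
  simp only [lieAct, map_sum, AddMonoidHom.mk'_apply, pairQ_C_mul]

lemma pairQ_C_mul_X_pow (r : R) (i j k : ℕ) (h : MvPolynomial (Fin 3) R) :
    pairQ (C r * X 0 ^ i * X 1 ^ j * X 2 ^ k) h
      = (apolarWeight (mono3 i j k) : R) * r * coeff (mono3 i j k) h := by
  rw [C_mul_X_pow_mul_X_pow_mul_X_pow_eq_monomial,
    pairQ_eq_sum_of_support_subset support_monomial_subset h, Finset.sum_singleton,
    coeff_monomial, if_pos rfl]

lemma pairQ_ternaryQuartic (a b : ℕ → ℕ → ℕ → R) :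
    pairQ (ternaryQuartic a) (ternaryQuartic b) =
      12 * a 4 0 0 * b 4 0 0 + 3 * a 3 1 0 * b 3 1 0 + 3 * a 3 0 1 * b 3 0 1
      + 2 * a 2 2 0 * b 2 2 0 + a 2 1 1 * b 2 1 1 + 2 * a 2 0 2 * b 2 0 2
      + 3 * a 1 3 0 * b 1 3 0 + a 1 2 1 * b 1 2 1 + a 1 1 2 * b 1 1 2 + 3 * a 1 0 3 * b 1 0 3
      + 12 * a 0 4 0 * b 0 4 0 + 3 * a 0 3 1 * b 0 3 1 + 2 * a 0 2 2 * b 0 2 2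
      + 3 * a 0 1 3 * b 0 1 3 + 12 * a 0 0 4 * b 0 0 4 := by
  conv_lhs => arg 1; rw [ternaryQuartic]
  simp only [pairQ_add, pairQ_C_mul_X_pow, coeff_mono3_ternaryQuartic]
  norm_num [apolarWeight, Nat.factorial]

lemma coeff_X_mul_pderiv (m : Fin 3 →₀ ℕ) (ξ η : Fin 3) (q : MvPolynomial (Fin 3) R) :
    coeff m (X ξ * pderiv η q) = if m ξ = 0 then 0
      else coeff (m - Finsupp.single ξ 1 + Finsupp.single η 1) q
        * (((m - Finsupp.single ξ 1 : Fin 3 →₀ ℕ) η : ℕ) + 1) := by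
  simp only [coeff_X_mul', coeff_pderiv, Finsupp.mem_support_iff, ne_eq, ite_not]

lemma MvPolynomial.IsHomogeneous.X_mul_pderiv {q : MvPolynomial (Fin 3) R}
    (hq : q.IsHomogeneous 4) (ξ η : Fin 3) : (X ξ * pderiv η q).IsHomogeneous 4 :=
  (isHomogeneous_X R ξ).mul hq.pderiv

lemma pairQ_X_mul_pderiv_harmonicQuartic {q : MvPolynomial (Fin 3) R} (hq : q.IsHomogeneous 4)
    (ξ η : Fin 3) : pairQ (X ξ * pderiv η q) (harmonicQuartic q) =
      if ξ = η then pairQ (X 0 * pderiv 0 q) (harmonicQuartic q) else 0 := by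
  rw [(hq.X_mul_pderiv ξ η).eq_ternaryQuartic, (hq.X_mul_pderiv 0 0).eq_ternaryQuartic,
    harmonicQuartic, pairQ_ternaryQuartic, pairQ_ternaryQuartic]
  fin_cases ξ <;> fin_cases η <;>
    simp only [coeff3, coeff_X_mul_pderiv, mono3_sub_single, mono3_add_single, mono3_apply_zero,
      mono3_apply_one, mono3_apply_two, harmonicCoeff, Fin.zero_eta, Fin.mk_one, Fin.reduceFinMk,
      Fin.isValue, Fin.reduceEq, ite_true, ite_false, Nat.reduceSub, Nat.reduceAdd,
      OfNat.ofNat_ne_zero, one_ne_zero, Nat.cast_ofNat, Nat.cast_zero, Nat.cast_one] <;>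
    ring

end

/-- For every traceless `𝔤 = Σ c_{ξη} ξ∂_η ∈ 𝔰𝔩₃(R)` and every ternary
quartic form `q` with harmonic quartic `h` (so `u⁴·h = SG q`), one has `⟨𝔤q, h⟩ = 0`. -/
theorem stmt3 {R : Type*} [CommRing R]
    (q h : MvPolynomial (Fin 3) R) (hq : q.IsHomogeneous 4)
    (hh : X 0 ^ 4 * h = SG q)
    (c : Fin 3 → Fin 3 → R) (htr : c 0 0 + c 1 1 + c 2 2 = 0) :
    pairQ (lieAct c q) h = 0 := by
  obtain rfl := eq_harmonicQuartic_of_X_pow_mul_eq_SG hq hh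
  have hrow (ξ : Fin 3) : ∑ η, c ξ η * pairQ (X ξ * pderiv η q) (harmonicQuartic q) =
      c ξ ξ * pairQ (X 0 * pderiv 0 q) (harmonicQuartic q) := by
    simp only [pairQ_X_mul_pderiv_harmonicQuartic hq ξ, mul_ite, mul_zero, Finset.sum_ite_eq,
      Finset.mem_univ, if_true]
  rw [pairQ_lieAct, Finset.sum_congr rfl fun ξ _ => hrow ξ, ← Finset.sum_mul, Fin.sum_univ_three,
    htr, zero_mul]
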